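/- arXiv:1705.02189 — 2 statements merged into one kernel-verified Lean document; each statement's English description precedes it below -/
import Mathlib

section
/- Consider h : ℝ³ → ℝ³ defined by h(x) = (sgn(x₂+x₃−2x₁), sgn(x₁+x₃−2x₂), sgn(x₁+x₂−2x₃)). Let η₀ ∈ ℝ and let g : [0,∞) → ℝ be measurable with |g(t)| ≤ 1/3 for almost every t, and set η(t) = η₀ + ∫₀ᵗ g(s) ds. Then x(t) = η(t)·(1,1,1) is a Filippov solution of ẋ = h(x) on [0,∞). Consequently, Filippov solutions of this system starting in the consensus line span{(1,1,1)} need not converge to a static vector. -/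
/-!
Near a consensus point `c • 1`, moving the `k`-th coordinate by `t ≠ 0` puts the point in an
open region where `h` is constant, equal to `sgn t • (1 - 2 eₖ)`. An open set is not null, so
these six vectors are values of `h` on `B(c • 1, δ) \ S` for every `δ > 0` and every null `S`.
Averaging over `k` gives `±(1/3) • 1`, so the Filippov set at every consensus point contains the
segment `[-1/3, 1/3] • 1`, which is all a curve `η(t) • 1` with `|η'| ≤ 1/3` needs.
-/

open MeasureTheory Set
open scoped ENNReal

noncomputable def eBall {ι : Type*} [Fintype ι] (x : ι → ℝ) (δ : ℝ) : Set (ι → ℝ) :=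
  {y | Real.sqrt (∑ i, (y i - x i) ^ 2) < δ}

noncomputable def filippov {ι κ : Type*} [Fintype ι] [Fintype κ]
    (h : (ι → ℝ) → (κ → ℝ)) (x : ι → ℝ) : Set (κ → ℝ) :=
  ⋂ (δ : ℝ) (_ : 0 < δ) (S : Set (ι → ℝ)) (_ : volume S = 0),
    closure (convexHull ℝ (h '' (eBall x δ \ S)))

/-- A Filippov solution of `ẋ = h(x)` on `[0, ∞)`. -/
def IsFilippovSolution {ι : Type*} [Fintype ι] (h : (ι → ℝ) → (ι → ℝ))
    (x : ℝ → (ι → ℝ)) : Prop :=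
  ∃ v : ℝ → (ι → ℝ),
    LocallyIntegrableOn v (Ici 0) volume ∧
    (∀ t, 0 ≤ t → x t = x 0 + ∫ s in (0:ℝ)..t, v s) ∧
    ∀ᵐ t ∂(volume.restrict (Ici (0:ℝ))), v t ∈ filippov h (x t)

noncomputable def ssign (s : ℝ) : ℝ := if 0 < s then 1 else if s < 0 then -1 else 0

/-- The three-node example system
`h(x) = (sgn(x₂+x₃−2x₁), sgn(x₁+x₃−2x₂), sgn(x₁+x₂−2x₃))`. -/
noncomputable def hex (x : Fin 3 → ℝ) : Fin 3 → ℝ :=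
  ![ssign (x 1 + x 2 - 2 * x 0), ssign (x 0 + x 2 - 2 * x 1), ssign (x 0 + x 1 - 2 * x 2)]

lemma ssign_eq_of_mul_pos {a b : ℝ} (h : 0 < a * b) : ssign a = ssign b := by
  rcases mul_pos_iff.mp h with ⟨ha, hb⟩ | ⟨ha, hb⟩
  · simp [ssign, ha, hb]
  · simp [ssign, ha, hb, ha.not_gt, hb.not_gt]

lemma ssign_neg (s : ℝ) : ssign (-s) = -ssign s := by
  unfold ssign
  split_ifs <;> linarith

lemma ssign_mul_of_pos {a : ℝ} (ha : 0 < a) (s : ℝ) : ssign (a * s) = ssign s := by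
  rcases lt_trichotomy s 0 with hs | rfl | hs
  · exact ssign_eq_of_mul_pos (mul_pos_of_neg_of_neg (mul_neg_of_pos_of_neg ha hs) hs)
  · simp
  · exact ssign_eq_of_mul_pos (by positivity)

lemma hex_apply (x : Fin 3 → ℝ) (i : Fin 3) : hex x i = ssign (∑ j, x j - 3 * x i) := by
  fin_cases i <;> simp [hex, Fin.sum_univ_three] <;> ring_nf

lemma isOpen_eBall {ι : Type*} [Fintype ι] (x : ι → ℝ) (δ : ℝ) : IsOpen (eBall x δ) :=
  isOpen_lt (by fun_prop) continuous_const

lemma add_single_mem_eBall {ι : Type*} [Fintype ι] [DecidableEq ι] (x : ι → ℝ) (k : ι)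
    {t δ : ℝ} (ht : |t| < δ) : x + Pi.single k t ∈ eBall x δ := by
  simpa [eBall, Pi.single_apply, Real.sqrt_sq_eq_abs] using ht

lemma IsOpen.nonempty_sdiff_of_measure_zero {X : Type*} [TopologicalSpace X] [MeasurableSpace X]
    {μ : Measure X} [μ.IsOpenPosMeasure] {U S : Set X} (hU : IsOpen U) (hne : U.Nonempty)
    (hS : μ S = 0) : (U \ S).Nonempty :=
  nonempty_of_measure_ne_zero (μ := μ) <| by
    rw [measure_sdiff_null hS]; exact hU.measure_ne_zero μ hne

lemma hex_mem_image_eBall_sdiff {x y : Fin 3 → ℝ} {δ : ℝ} {S : Set (Fin 3 → ℝ)}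
    (hy : y ∈ eBall x δ) (hgen : ∀ i, ∑ j, y j - 3 * y i ≠ 0) (hS : volume S = 0) :
    hex y ∈ hex '' (eBall x δ \ S) := by
  set U := eBall x δ ∩ ⋂ i, {z | 0 < (∑ j, z j - 3 * z i) * (∑ j, y j - 3 * y i)}
  have hU : IsOpen U :=
    (isOpen_eBall x δ).inter <|
      isOpen_iInter_of_finite fun i => isOpen_lt continuous_const (by fun_prop)
  have hyU : y ∈ U := ⟨hy, mem_iInter.2 fun i => mul_self_pos.2 (hgen i)⟩
  obtain ⟨z, ⟨hzB, hzL⟩, hzS⟩ := hU.nonempty_sdiff_of_measure_zero ⟨y, hyU⟩ hS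
  refine ⟨z, ⟨hzB, hzS⟩, funext fun i => ?_⟩
  simp only [hex_apply]
  exact ssign_eq_of_mul_pos (mem_iInter.1 hzL i)

lemma hex_mem_image_eBall_consensus_sdiff {c t δ : ℝ} {S : Set (Fin 3 → ℝ)} (ht : t ≠ 0)
    (htδ : |t| < δ) (hS : volume S = 0) (k : Fin 3) :
    (fun i => if i = k then -ssign t else ssign t) ∈ hex '' (eBall (fun _ => c) δ \ S) := by
  set y : Fin 3 → ℝ := (fun _ => c) + Pi.single k t
  have hlin : ∀ i, ∑ j, y j - 3 * y i = if i = k then 2 * -t else t := by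
    intro i
    by_cases hik : i = k
    · subst hik; simp [y, Finset.sum_add_distrib]; ring
    · simp [y, Finset.sum_add_distrib, hik]
  have hy : hex y = fun i => if i = k then -ssign t else ssign t := by
    funext i
    rw [hex_apply, hlin]
    split_ifs
    · rw [ssign_mul_of_pos two_pos, ssign_neg]
    · rfl
  rw [← hy]
  refine hex_mem_image_eBall_sdiff (add_single_mem_eBall _ k htδ) (fun i => ?_) hS
  rw [hlin]
  split_ifs <;> simp [ht]

lemma consensus_mem_filippov_hex (c a : ℝ) (ha : |a| ≤ 1 / 3) :
    (fun _ : Fin 3 => a) ∈ filippov hex (fun _ => c) := by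
  simp only [filippov, mem_iInter]
  intro δ hδ S hS
  refine subset_closure ?_
  set K := convexHull ℝ (hex '' (eBall (fun _ : Fin 3 => c) δ \ S))
  have hK : Convex ℝ K := convex_convexHull ℝ _
  have vertex : ∀ t : ℝ, t ≠ 0 → |t| < δ → ∀ k : Fin 3,
      (fun i => if i = k then -ssign t else ssign t) ∈ K := by
    intro t ht0 htδ k
    exact subset_convexHull ℝ _ (hex_mem_image_eBall_consensus_sdiff ht0 htδ hS k)
  have centroid : ∀ t : ℝ, t ≠ 0 → |t| < δ → (fun _ : Fin 3 => ssign t / 3) ∈ K := by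
    intro t ht0 htδ
    have := hK.sum_mem (t := Finset.univ) (w := fun _ => 1 / 3) (by norm_num)
      (by simp) (fun k _ => vertex t ht0 htδ k)
    convert this using 1
    funext i
    fin_cases i <;> simp [Finset.sum_apply, Fin.sum_univ_three] <;> ring
  have hplus := centroid (δ / 2) (by positivity) (by rw [abs_of_pos (by positivity)]; linarith)
  have hminus := centroid (-(δ / 2)) (by simp [hδ.ne'])
    (by rw [abs_neg, abs_of_pos (by positivity)]; linarith)
  rw [ssign_neg] at hminus
  rw [show ssign (δ / 2) = 1 from if_pos (by positivity)] at hminus hplus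
  obtain ⟨hlo, hhi⟩ := abs_le.mp ha
  convert hK hplus hminus (a := (1 + 3 * a) / 2) (b := (1 - 3 * a) / 2) (by linarith) (by linarith)
    (by ring) using 1
  funext i; simp; ring

lemma locallyIntegrableOn_of_ae_norm_le {X E : Type*} [TopologicalSpace X] [MeasurableSpace X]
    [NormedAddCommGroup E] {μ : Measure X} [IsLocallyFiniteMeasure μ] {f : X → E} {s : Set X}
    {C : ℝ} (hf : AEStronglyMeasurable f (μ.restrict s)) (hbd : ∀ᵐ x ∂μ.restrict s, ‖f x‖ ≤ C) :
    LocallyIntegrableOn f s μ := by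
  intro x _
  obtain ⟨U, hU, hμU⟩ := μ.finiteAt_nhds x
  refine ⟨s ∩ U, inter_mem_nhdsWithin s hU, ?_⟩
  exact IntegrableOn.of_bound ((measure_mono inter_subset_right).trans_lt hμU)
    (hf.mono_set inter_subset_left) C (ae_restrict_of_ae_restrict_of_subset inter_subset_left hbd)

theorem isFilippovSolution_consensus_curve {ι : Type*} [Fintype ι] {h : (ι → ℝ) → (ι → ℝ)}
    {r : ℝ} (hh : ∀ c a, |a| ≤ r → (fun _ : ι => a) ∈ filippov h (fun _ => c)) (η₀ : ℝ)
    {g : ℝ → ℝ}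
    (hg : AEStronglyMeasurable g (volume.restrict (Ici 0)))
    (hbd : ∀ᵐ t ∂(volume.restrict (Ici (0:ℝ))), |g t| ≤ r) :
    IsFilippovSolution h (fun t _ => η₀ + ∫ s in (0:ℝ)..t, g s) := by
  let L : ℝ →L[ℝ] (ι → ℝ) := ContinuousLinearMap.pi fun _ => ContinuousLinearMap.id ℝ ℝ
  have hloc : LocallyIntegrableOn g (Ici 0) :=
    locallyIntegrableOn_of_ae_norm_le hg (by simpa only [Real.norm_eq_abs] using hbd)
  refine ⟨L ∘ g, L.locallyIntegrableOn_comp hloc, fun t ht => ?_, ?_⟩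
  · have hgt : IntervalIntegrable g volume 0 t :=
      (intervalIntegrable_iff_integrableOn_Icc_of_le ht).2
        (hloc.integrableOn_compact_subset Icc_subset_Ici_self isCompact_Icc)
    simp only [Function.comp_apply, L.intervalIntegral_comp_comm hgt]
    funext i
    simp [L]
  · filter_upwards [hbd] with t ht using hh _ _ ht

/-- **Non-static Filippov solutions on the consensus line for the 3-node example.**
For any `η₀ ∈ ℝ` and any measurable `g` with `|g(t)| ≤ 1/3` for a.e. `t ≥ 0`, the curve
`x(t) = (η₀ + ∫₀ᵗ g) · (1,1,1)` is a Filippov solution of `ẋ = h(x)` on `[0, ∞)`;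
hence Filippov solutions starting on the consensus line need not converge to a static
vector. -/
theorem filippov_solution_drifting_on_consensus_line
    (η₀ : ℝ) (g : ℝ → ℝ) (hg : Measurable g)
    (hbd : ∀ᵐ t ∂(volume.restrict (Ici (0:ℝ))), |g t| ≤ 1/3) :
    IsFilippovSolution hex (fun t => fun _ : Fin 3 => η₀ + ∫ s in (0:ℝ)..t, g s) :=
  isFilippovSolution_consensus_curve consensus_mem_filippov_hex η₀ hg.aestronglyMeasurable hbd
end

section
/- Let f : ℝ^N → ℝ^M be locally bounded and continuous at a point x ∈ ℝ^N. Then its Filippov set-valued map at x is the singleton F[f](x) = {f(x)}. -/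
open MeasureTheory Set
open scoped ENNReal

/-- A map between finite-dimensional real coordinate spaces is locally bounded. -/
def LocBounded {ι κ : Type*} [Fintype ι] [Fintype κ] (f : (ι → ℝ) → (κ → ℝ)) : Prop :=
  ∀ x : ι → ℝ, ∃ δ : ℝ, 0 < δ ∧ Bornology.IsBounded (f '' eBall x δ)

/-!
Taking `S = ∅` shows that `F[f](x)` lies in the closed convex hull of `f(B(x, δ))`, which
continuity squeezes into any closed ball around `f x`. Conversely every neighbourhood of `x`
has positive Lebesgue measure, so it meets the complement of a null set `S`, whence `f x` is a
limit of values of `f` off `S`.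
-/

open Filter Topology Metric

theorem mem_closure_image_diff_of_measure_zero {X Y : Type*} [TopologicalSpace X]
    [MeasurableSpace X] [TopologicalSpace Y] {μ : Measure X} [μ.IsOpenPosMeasure]
    {f : X → Y} {x : X} (hf : ContinuousAt f x) {U S : Set X} (hU : U ∈ 𝓝 x)
    (hS : μ S = 0) : f x ∈ closure (f '' (U \ S)) := by
  rw [mem_closure_iff_nhds]
  intro t ht
  have hpos : μ (f ⁻¹' t ∩ U) ≠ 0 := (μ.measure_pos_of_mem_nhds (inter_mem (hf ht) hU)).ne'
  obtain ⟨z, ⟨hzt, hzU⟩, hzS⟩ : ((f ⁻¹' t ∩ U) \ S).Nonempty :=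
    sdiff_nonempty.2 fun hsub => hpos (measure_mono_null hsub hS)
  exact ⟨f z, hzt, z, ⟨hzU, hzS⟩, rfl⟩

section
variable {ι κ : Type*} [Fintype ι] [Fintype κ]

theorem eBall_eq_preimage_ball (x : ι → ℝ) (δ : ℝ) :
    eBall x δ = WithLp.toLp 2 ⁻¹' ball (WithLp.toLp 2 x : EuclideanSpace ℝ ι) δ := by
  ext y
  simp [eBall, EuclideanSpace.dist_eq, Real.dist_eq, sq_abs]

theorem nhds_basis_eBall (x : ι → ℝ) : (𝓝 x).HasBasis (0 < ·) (eBall x) := by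
  rw [(PiLp.homeomorph 2 fun _ : ι => ℝ).symm.nhds_eq_comap x]
  convert nhds_basis_ball.comap _ using 1
  exact funext (eBall_eq_preimage_ball x)

theorem self_mem_filippov {h : (ι → ℝ) → (κ → ℝ)} {x : ι → ℝ} (hh : ContinuousAt h x) :
    h x ∈ filippov h x := by
  simp only [filippov, mem_iInter]
  intro δ hδ S hS
  exact closure_mono (subset_convexHull ℝ _)
    (mem_closure_image_diff_of_measure_zero hh ((nhds_basis_eBall x).mem_of_mem hδ) hS)

theorem filippov_subset_of_image_eBall_subset {h : (ι → ℝ) → (κ → ℝ)} {x : ι → ℝ} {δ : ℝ}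
    (hδ : 0 < δ) {K : Set (κ → ℝ)} (hKc : Convex ℝ K) (hKcl : IsClosed K)
    (hK : h '' eBall x δ ⊆ K) : filippov h x ⊆ K := by
  intro y hy
  simp only [filippov, mem_iInter] at hy
  have hy' := hy δ hδ ∅ measure_empty
  rw [sdiff_empty] at hy'
  exact closure_minimal (convexHull_min hK hKc) hKcl hy'

end

theorem filippov_of_continuousAt_general {N M : ℕ}
    (f : (Fin N → ℝ) → (Fin M → ℝ))
    (x : Fin N → ℝ) (hcont : ContinuousAt f x) :
    filippov f x = {f x} := by
  refine subset_antisymm (fun y hy => ?_) (singleton_subset_iff.2 (self_mem_filippov hcont))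
  refine mem_singleton_iff.2 (eq_of_forall_dist_le fun ε hε => ?_)
  obtain ⟨δ, hδ, hδε⟩ :=
    (nhds_basis_eBall x).mem_iff.1 (hcont (closedBall_mem_nhds (f x) hε))
  exact filippov_subset_of_image_eBall_subset hδ (convex_closedBall _ _) isClosed_closedBall
    (image_subset_iff.2 hδε) hy

/-- **The Filippov set-valued map at a continuity point is a singleton.**
If `f : ℝ^N → ℝ^M` is locally bounded and continuous at `x`, then `F[f](x) = {f(x)}`. -/
theorem filippov_of_continuousAt {N M : ℕ}
    (f : (Fin N → ℝ) → (Fin M → ℝ)) (hf : LocBounded f)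
    (x : Fin N → ℝ) (hcont : ContinuousAt f x) :
    filippov f x = {f x} :=
  filippov_of_continuousAt_general f x hcont
end
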